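/- arXiv:2205.13203 — 7 statements merged into one kernel-verified Lean document; each statement's English description precedes it below -/
import Mathlib

section
/- If Λ is an internally chain transitive closed invariant subset of a compact metric dynamical system (X,f), A ⊆ Λ is internally chain mixing, then Λ is internally chain mixing. -/
/-- `IsEpsChainIn f S ε n a b`: there is an ε-chain of length `n` in `S` connecting `a` to `b`,
i.e. a finite sequence `x_1, …, x_n ∈ S` with `x_1 = a`, `dist (f x_i) x_{i+1} < ε` for
`1 ≤ i ≤ n-1`, and `dist (f x_n) b < ε`. -/
def IsEpsChainIn {X : Type*} [MetricSpace X] (f : X → X) (S : Set X) (ε : ℝ)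
    (n : ℕ) (a b : X) : Prop :=
  ∃ c : ℕ → X, 1 ≤ n ∧ c 0 = a ∧ (∀ i < n, c i ∈ S) ∧
    (∀ i, i + 1 < n → dist (f (c i)) (c (i + 1)) < ε) ∧ dist (f (c (n - 1))) b < ε

/-- A set `A` is internally chain transitive if for all `a, b ∈ A` and `ε > 0` there is an
ε-chain in `A` connecting `a` to `b`. -/
def InternallyChainTransitive {X : Type*} [MetricSpace X] (f : X → X) (A : Set X) : Prop :=
  ∀ a ∈ A, ∀ b ∈ A, ∀ ε : ℝ, 0 < ε → ∃ n : ℕ, IsEpsChainIn f A ε n a b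

/-- A set `A` is internally chain mixing if for all `a, b ∈ A` and `ε > 0` there is `N` such
that for every `n ≥ N` there is an ε-chain of length `n` in `A` connecting `a` to `b`. -/
def InternallyChainMixing {X : Type*} [MetricSpace X] (f : X → X) (A : Set X) : Prop :=
  ∀ a ∈ A, ∀ b ∈ A, ∀ ε : ℝ, 0 < ε → ∃ N : ℕ, ∀ n ≥ N, IsEpsChainIn f A ε n a b

lemma IsEpsChainIn.mono {X : Type*} [MetricSpace X] {f : X → X} {S T : Set X} {ε : ℝ}
    {n : ℕ} {a b : X} (h : IsEpsChainIn f S ε n a b) (hST : S ⊆ T) :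
    IsEpsChainIn f T ε n a b := by
  obtain ⟨c, hn, h0, hS, hd, hl⟩ := h
  exact ⟨c, hn, h0, fun i hi => hST (hS i hi), hd, hl⟩

lemma IsEpsChainIn.concat {X : Type*} [MetricSpace X] {f : X → X} {S : Set X} {ε : ℝ}
    {n m : ℕ} {a b p : X} (h1 : IsEpsChainIn f S ε n a p) (h2 : IsEpsChainIn f S ε m p b) :
    IsEpsChainIn f S ε (n + m) a b := by
  obtain ⟨c, hn, hc0, hcS, hcd, hcl⟩ := h1
  obtain ⟨d, hm, hd0, hdS, hdd, hdl⟩ := h2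
  refine ⟨fun i => if i < n then c i else d (i - n), by omega, ?_, ?_, ?_, ?_⟩
  · simp [show 0 < n by omega, hc0]
  · intro i hi
    by_cases h : i < n
    · simpa [h] using hcS i h
    · simpa [h] using hdS (i - n) (by omega)
  · intro i hi
    rcases lt_trichotomy (i + 1) n with h | h | h
    · have hi' : i < n := by omega
      simpa [h, hi'] using hcd i h
    · have hi' : i < n := by omega
      have : i = n - 1 := by omega
      simp only [hi', if_pos, show ¬ (i + 1 < n) by omega, if_neg, not_false_iff]
      rw [this, show n - 1 + 1 - n = 0 by omega, hd0]
      exact hcl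
    · have hi' : ¬ i < n := by omega
      have h2' : ¬ i + 1 < n := by omega
      simp only [hi', h2', if_neg, not_false_iff]
      have := hdd (i - n) (by omega)
      rwa [show i - n + 1 = i + 1 - n by omega] at this
  · have h1 : ¬ (n + m - 1 < n) := by omega
    simp only [h1, if_neg, not_false_iff]
    rwa [show n + m - 1 - n = m - 1 by omega]

theorem stmt0 {X : Type*} [MetricSpace X] [CompactSpace X] (f : X → X) (hf : Continuous f)
    (Λ A : Set X)
    (hΛclosed : IsClosed Λ) (hΛinv : f '' Λ ⊆ Λ) (hΛne : Λ.Nonempty)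
    (hΛICT : InternallyChainTransitive f Λ)
    (hAclosed : IsClosed A) (hAinv : f '' A ⊆ A) (hAne : A.Nonempty)
    (hAsub : A ⊆ Λ) (hAICM : InternallyChainMixing f A) :
    InternallyChainMixing f Λ := by
  intro a ha b hb ε hε
  obtain ⟨p, hp⟩ := hAne
  obtain ⟨n₁, hch1⟩ := hΛICT a ha p (hAsub hp) ε hε
  obtain ⟨n₂, hch2⟩ := hΛICT p (hAsub hp) b hb ε hε
  obtain ⟨N, hN⟩ := hAICM p hp p hp ε hε
  refine ⟨n₁ + N + n₂, fun n hn => ?_⟩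
  have hmid := (hN (n - n₁ - n₂) (by omega)).mono hAsub
  have := (hch1.concat hmid).concat hch2
  rwa [show n₁ + (n - n₁ - n₂) + n₂ = n by omega] at this
end

section
/- If Λ is an internally chain transitive closed invariant subset of a compact metric dynamical system (X,f) and Λ contains a fixed point of f, then Λ is internally chain mixing. -/
theorem stmt1 {X : Type*} [MetricSpace X] [CompactSpace X] (f : X → X) (hf : Continuous f)
    (Λ : Set X)
    (hΛclosed : IsClosed Λ) (hΛinv : f '' Λ ⊆ Λ) (hΛne : Λ.Nonempty)
    (hΛICT : InternallyChainTransitive f Λ)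
    (p : X) (hpΛ : p ∈ Λ) (hfix : f p = p) :
    InternallyChainMixing f Λ := by
  intro a ha b hb ε hε
  obtain ⟨n1, c1, hn1, hc1a, hc1mem, hc1step, hc1end⟩ := hΛICT a ha p hpΛ ε hε
  obtain ⟨n2, c2, hn2, hc2p, hc2mem, hc2step, hc2end⟩ := hΛICT p hpΛ b hb ε hε
  refine ⟨n1 + n2, fun n hn => ?_⟩
  set m := n - n2 with hm
  have hmn1 : n1 ≤ m := by omega
  refine ⟨fun i => if i < n1 then c1 i else if i < m then p else c2 (i - m),
    by omega, ?_, ?_, ?_, ?_⟩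
  · have h0 : (0 : ℕ) < n1 := hn1
    simp [h0, hc1a]
  · intro i hi
    dsimp only
    split_ifs with h1 h2
    · exact hc1mem i h1
    · exact hpΛ
    · exact hc2mem (i - m) (by omega)
  · intro i hi
    dsimp only
    by_cases hA : i + 1 < n1
    · rw [if_pos (by omega : i < n1), if_pos hA]
      exact hc1step i hA
    by_cases hB : i + 1 = n1
    · rw [if_pos (by omega : i < n1)]
      have hep : (if i + 1 < m then p else c2 (i + 1 - m)) = p := by
        split_ifs with h
        · rfl
        · have : i + 1 = m := by omega
          rw [this]; simpa using hc2p
      rw [if_neg (by omega : ¬ i + 1 < n1), hep]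
      have : i = n1 - 1 := by omega
      rw [this]; exact hc1end
    by_cases hC : i < m
    · rw [if_neg (by omega : ¬ i < n1), if_pos hC, if_neg (by omega : ¬ i + 1 < n1)]
      have hep : (if i + 1 < m then p else c2 (i + 1 - m)) = p := by
        split_ifs with h
        · rfl
        · have : i + 1 = m := by omega
          rw [this]; simpa using hc2p
      rw [hep, hfix]
      simpa using hε
    · rw [if_neg (by omega : ¬ i < n1), if_neg hC, if_neg (by omega : ¬ i + 1 < n1),
        if_neg (by omega : ¬ i + 1 < m)]
      have h1 : i + 1 - m = (i - m) + 1 := by omega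
      rw [h1]
      exact hc2step (i - m) (by omega)
  · dsimp only
    rw [if_neg (by omega : ¬ n - 1 < n1), if_neg (by omega : ¬ n - 1 < m)]
    have : n - 1 - m = n2 - 1 := by omega
    rw [this]
    exact hc2end
end

section
/- Suppose a dynamical system (X,f) on a compact metric space is topologically transitive, has the shadowing property, and possesses two periodic points p₁ and p₂ whose minimal periods n₁ and n₂ are coprime. Then (X,f) is topologically mixing. -/
/-- `u` is a δ-pseudo-orbit for `f`. -/
def IsPseudoOrbit {X : Type*} [MetricSpace X] (f : X → X) (δ : ℝ) (u : ℕ → X) : Prop :=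
  ∀ n, dist (u (n + 1)) (f (u n)) < δ

/-- `(X, f)` has the shadowing property: every δ-pseudo-orbit is ε-shadowed by a point. -/
def ShadowingProperty {X : Type*} [MetricSpace X] (f : X → X) : Prop :=
  ∀ ε : ℝ, 0 < ε → ∃ δ : ℝ, 0 < δ ∧
    ∀ u : ℕ → X, IsPseudoOrbit f δ u → ∃ y : X, ∀ n, dist (f^[n] y) (u n) < ε

/-- `(X, f)` is topologically transitive. -/
def TopologicallyTransitive {X : Type*} [MetricSpace X] (f : X → X) : Prop :=
  ∀ U V : Set X, IsOpen U → IsOpen V → U.Nonempty → V.Nonempty →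
    ∃ n : ℕ, 1 ≤ n ∧ (f^[n] '' U ∩ V).Nonempty

/-- `(X, f)` is topologically mixing. -/
def TopologicallyMixing {X : Type*} [MetricSpace X] (f : X → X) : Prop :=
  ∀ U V : Set X, IsOpen U → IsOpen V → U.Nonempty → V.Nonempty →
    ∃ N : ℕ, ∀ n > N, (f^[n] '' U ∩ V).Nonempty


open Function Metric Set


lemma rep_lemma {a b m : ℕ} (ha : 0 < a) (hb : 0 < b) (hco : Nat.Coprime a b)
    (hm : a * b ≤ m) : ∃ i j : ℕ, m = i * a + j * b := by
  rcases eq_or_lt_of_le (show 1 ≤ b from hb) with hb1 | hb1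
  · exact ⟨0, m, by rw [← hb1]; ring⟩
  haveI : NeZero b := ⟨by omega⟩
  set i := ((m : ZMod b) * (a : ZMod b)⁻¹).val with hi
  have hilt : i < b := ZMod.val_lt _
  have hia : i * a ≤ m := by
    have h1 : i * a ≤ (b - 1) * a := Nat.mul_le_mul_right _ (by omega)
    have h2 : (b - 1) * a < b * a := Nat.mul_lt_mul_of_lt_of_le (by omega) le_rfl (by omega)
    have h3 : b * a = a * b := Nat.mul_comm _ _
    omega
  have hmod : ((m - i * a : ℕ) : ZMod b) = 0 := by
    have h1 : ((i * a : ℕ) : ZMod b) = (m : ZMod b) := by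
      push_cast
      rw [hi, ZMod.natCast_val, ZMod.cast_id]
      calc (m : ZMod b) * (a : ZMod b)⁻¹ * a
          = (m : ZMod b) * ((a : ZMod b) * (a : ZMod b)⁻¹) := by ring
        _ = m := by rw [ZMod.coe_mul_inv_eq_one a hco, mul_one]
    rw [Nat.cast_sub hia, h1, sub_self]
  rw [ZMod.natCast_eq_zero_iff] at hmod
  obtain ⟨j, hj⟩ := hmod
  refine ⟨i, j, ?_⟩
  have : j * b = b * j := Nat.mul_comm _ _
  omega

def PChain {X : Type*} [MetricSpace X] (f : X → X) (δ : ℝ) (x y : X) (m : ℕ) : Prop :=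
  ∃ u : ℕ → X, u 0 = x ∧ u m = y ∧ ∀ k < m, dist (u (k + 1)) (f (u k)) < δ

lemma PChain.comp {X : Type*} [MetricSpace X] {f : X → X} {δ : ℝ} {x y z : X} {m m' : ℕ}
    (h1 : PChain f δ x y m) (h2 : PChain f δ y z m') : PChain f δ x z (m + m') := by
  obtain ⟨u, hu0, hum, hus⟩ := h1
  obtain ⟨u', hu'0, hu'm, hu's⟩ := h2
  refine ⟨fun k => if k ≤ m then u k else u' (k - m), by simpa using hu0, ?_, ?_⟩
  · show (if m + m' ≤ m then u (m + m') else u' (m + m' - m)) = z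
    rcases Nat.eq_zero_or_pos m' with h | h
    · subst h
      rw [if_pos (by omega), Nat.add_zero, hum, ← hu'0]
      exact hu'm
    · rw [if_neg (by omega), Nat.add_sub_cancel_left, hu'm]
  · intro k hk
    show dist (if k + 1 ≤ m then u (k + 1) else u' (k + 1 - m))
        (f (if k ≤ m then u k else u' (k - m))) < δ
    rcases lt_trichotomy k m with hkm | hkm | hkm
    · rw [if_pos (by omega : k + 1 ≤ m), if_pos (by omega : k ≤ m)]
      exact hus k hkm
    · subst hkm
      rw [if_neg (by omega : ¬ k + 1 ≤ k), if_pos (le_refl k), hum, ← hu'0,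
        show k + 1 - k = 1 by omega]
      exact hu's 0 (by omega)
    · rw [if_neg (by omega : ¬ k + 1 ≤ m), if_neg (by omega : ¬ k ≤ m),
        show k + 1 - m = (k - m) + 1 by omega]
      exact hu's (k - m) (by omega)

lemma pchain_orbit {X : Type*} [MetricSpace X] {f : X → X} {δ : ℝ} (hδ : 0 < δ)
    (x : X) (m : ℕ) : PChain f δ x (f^[m] x) m := by
  refine ⟨fun k => f^[k] x, rfl, rfl, fun k _ => ?_⟩
  show dist (f^[k + 1] x) (f (f^[k] x)) < δ
  rw [Function.iterate_succ_apply']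
  simpa using hδ

lemma pchain_loop {X : Type*} [MetricSpace X] {f : X → X} {δ : ℝ} (hδ : 0 < δ)
    {p : X} {n : ℕ} (hp : f^[n] p = p) (i : ℕ) : PChain f δ p p (i * n) := by
  induction i with
  | zero => exact ⟨fun _ => p, rfl, rfl, fun k hk => by omega⟩
  | succ i ih =>
      have h := pchain_orbit (f := f) hδ p n
      rw [hp] at h
      have := ih.comp h
      rwa [show i * n + n = (i + 1) * n by ring] at this

lemma pchain_trans {X : Type*} [MetricSpace X] {f : X → X} (hf : Continuous f)
    (htrans : TopologicallyTransitive f) {δ : ℝ} (hδ : 0 < δ) (x v : X) :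
    ∃ m : ℕ, 1 ≤ m ∧ PChain f δ x v m := by
  obtain ⟨η, hη, hηc⟩ := Metric.continuousAt_iff.mp (hf.continuousAt (x := x)) (δ / 2)
    (by linarith)
  obtain ⟨m, hm1, w, hw⟩ := htrans (ball x η) (ball v (δ / 2)) isOpen_ball isOpen_ball
    ⟨x, mem_ball_self hη⟩ ⟨v, mem_ball_self (by linarith)⟩
  obtain ⟨⟨zz, hz, rfl⟩, hwv⟩ := hw
  rw [mem_ball] at hz hwv
  refine ⟨m, hm1, fun k => if k = 0 then x else if m ≤ k then v else f^[k] zz,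
    by simp, ?_, ?_⟩
  · show (if m = 0 then x else if m ≤ m then v else f^[m] zz) = v
    rw [if_neg (by omega : ¬ m = 0), if_pos (le_refl m)]
  · intro k hk
    show dist (if k + 1 = 0 then x else if m ≤ k + 1 then v else f^[k + 1] zz)
        (f (if k = 0 then x else if m ≤ k then v else f^[k] zz)) < δ
    rw [if_neg (by omega : ¬ k + 1 = 0)]
    rcases Nat.eq_zero_or_pos k with rfl | hk0
    · rw [if_pos rfl]
      rcases eq_or_lt_of_le hm1 with h | h
      · rw [if_pos (by omega : m ≤ 0 + 1)]
        have h1 := dist_triangle v (f zz) (f x)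
        have h2 := hηc hz
        have h3 : dist (f zz) v < δ / 2 := by
          rw [← h, Function.iterate_one] at hwv; exact hwv
        rw [dist_comm] at h3
        linarith
      · rw [if_neg (by omega : ¬ m ≤ 0 + 1), Nat.zero_add, Function.iterate_one]
        have := hηc hz
        linarith
    · rw [if_neg (by omega : ¬ k = 0), if_neg (by omega : ¬ m ≤ k)]
      rcases eq_or_lt_of_le (Nat.succ_le_of_lt hk) with h | h
      · rw [if_pos (le_of_eq h.symm),
          show f (f^[k] zz) = f^[k + 1] zz from (Function.iterate_succ_apply' f k zz).symm,
          show k + 1 = m from h, dist_comm]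
        linarith
      · rw [if_neg (by omega : ¬ m ≤ k + 1), Function.iterate_succ_apply' f k zz]
        simpa using hδ

lemma pchain_pseudo {X : Type*} [MetricSpace X] {f : X → X} {δ : ℝ} (hδ : 0 < δ)
    {x v : X} {n : ℕ} (h : PChain f δ x v n) :
    ∃ u : ℕ → X, IsPseudoOrbit f δ u ∧ u 0 = x ∧ u n = v := by
  obtain ⟨u, hu0, hun, hus⟩ := h
  refine ⟨fun k => if k ≤ n then u k else f^[k - n] v, ?_, by simpa using hu0, by simp [hun]⟩
  intro k
  show dist (if k + 1 ≤ n then u (k+1) else f^[k+1-n] v)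
      (f (if k ≤ n then u k else f^[k-n] v)) < δ
  rcases lt_trichotomy k n with hkn | hkn | hkn
  · rw [if_pos (by omega : k + 1 ≤ n), if_pos (by omega : k ≤ n)]
    exact hus k hkn
  · subst hkn
    rw [if_neg (by omega : ¬ k + 1 ≤ k), if_pos (le_refl k), hun,
      show k + 1 - k = 1 by omega, Function.iterate_one]
    simpa using hδ
  · rw [if_neg (by omega : ¬ k + 1 ≤ n), if_neg (by omega : ¬ k ≤ n),
      show k + 1 - n = (k - n) + 1 by omega, Function.iterate_succ_apply']
    simpa using hδ

theorem stmt3 {X : Type*} [MetricSpace X] [CompactSpace X] (f : X → X) (hf : Continuous f)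
    (htrans : TopologicallyTransitive f) (hshadow : ShadowingProperty f)
    (p₁ p₂ : X) (hp₁ : p₁ ∈ Function.periodicPts f) (hp₂ : p₂ ∈ Function.periodicPts f)
    (hco : Nat.Coprime (Function.minimalPeriod f p₁) (Function.minimalPeriod f p₂)) :
    TopologicallyMixing f := by
  intro U V hU hV hUne hVne
  obtain ⟨x, hx⟩ := hUne
  obtain ⟨v, hv⟩ := hVne
  obtain ⟨ε₁, hε₁, hbU⟩ := Metric.isOpen_iff.mp hU x hx
  obtain ⟨ε₂, hε₂, hbV⟩ := Metric.isOpen_iff.mp hV v hv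
  set ε := min ε₁ ε₂ with hε
  have hεpos : 0 < ε := lt_min hε₁ hε₂
  obtain ⟨δ, hδ, hsh⟩ := hshadow ε hεpos
  set n₁ := Function.minimalPeriod f p₁ with hn₁
  set n₂ := Function.minimalPeriod f p₂ with hn₂
  have hn₁pos : 0 < n₁ := Function.minimalPeriod_pos_of_mem_periodicPts hp₁
  have hn₂pos : 0 < n₂ := Function.minimalPeriod_pos_of_mem_periodicPts hp₂
  have hper₁ : f^[n₁] p₁ = p₁ := Function.isPeriodicPt_minimalPeriod f p₁
  have hper₂ : f^[n₂] p₂ = p₂ := Function.isPeriodicPt_minimalPeriod f p₂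
  obtain ⟨a, _, hca⟩ := pchain_trans hf htrans hδ x p₁
  obtain ⟨b, _, hcb⟩ := pchain_trans hf htrans hδ p₁ p₂
  obtain ⟨c, _, hcc⟩ := pchain_trans hf htrans hδ p₂ v
  refine ⟨a + b + c + n₁ * n₂, fun n hn => ?_⟩
  obtain ⟨i, j, hij⟩ := rep_lemma hn₁pos hn₂pos hco
    (show n₁ * n₂ ≤ n - (a + b + c) by omega)
  have hchain : PChain f δ x v n := by
    have := (((hca.comp (pchain_loop hδ hper₁ i)).comp hcb).comp
      (pchain_loop hδ hper₂ j)).comp hcc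
    rwa [show a + i * n₁ + b + j * n₂ + c = n by omega] at this
  obtain ⟨u, hupo, hu0, hun⟩ := pchain_pseudo hδ hchain
  obtain ⟨y, hy⟩ := hsh u hupo
  have hyU : y ∈ U := by
    have := hy 0
    rw [Function.iterate_zero_apply, hu0] at this
    exact hbU (Metric.mem_ball.mpr (lt_of_lt_of_le this (min_le_left _ _)))
  have hyV : f^[n] y ∈ V := by
    have := hy n
    rw [hun] at this
    exact hbV (Metric.mem_ball.mpr (lt_of_lt_of_le this (min_le_right _ _)))
  exact ⟨f^[n] y, ⟨y, hyU, rfl⟩, hyV⟩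
end

section
/- For any point x in a compact metric dynamical system (X,f), the ω-limit set ω_f(x) is internally chain transitive. -/
open Filter

/-- The ω-limit set of `x`: the set of limit points of the forward orbit of `x`. -/
def omegaLimitSet {X : Type*} [MetricSpace X] (f : X → X) (x : X) : Set X :=
  {y | ∃ φ : ℕ → ℕ, StrictMono φ ∧ Tendsto (fun k => f^[φ k] x) atTop (nhds y)}

lemma orbit_near_omega {X : Type*} [MetricSpace X] [CompactSpace X] (f : X → X)
    (x : X) {η : ℝ} (hη : 0 < η) :
    ∃ N : ℕ, ∀ n ≥ N, ∃ y ∈ omegaLimitSet f x, dist (f^[n] x) y < η := by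
  by_contra h
  push_neg at h
  have hfreq : ∃ᶠ n in atTop, ∀ y ∈ omegaLimitSet f x, η ≤ dist (f^[n] x) y := by
    rw [Filter.frequently_atTop]
    intro N
    obtain ⟨n, hn, h2⟩ := h N
    exact ⟨n, hn, fun y hy => (h2 y hy)⟩
  obtain ⟨ψ, hψ, hP⟩ := Filter.extraction_of_frequently_atTop hfreq
  obtain ⟨y, -, φ, hφ, hty⟩ :=
    isCompact_univ.tendsto_subseq (x := fun n => f^[ψ n] x) (fun n => Set.mem_univ _)
  have hyΩ : y ∈ omegaLimitSet f x := ⟨ψ ∘ φ, hψ.comp hφ, hty⟩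
  obtain ⟨K, hK⟩ := Metric.tendsto_atTop.mp hty η hη
  have h1 := hP (φ K) y hyΩ
  have h2 := hK K le_rfl
  simp only [Function.comp_apply] at h2
  linarith

theorem stmt7 {X : Type*} [MetricSpace X] [CompactSpace X] (f : X → X) (hf : Continuous f)
    (x : X) : InternallyChainTransitive f (omegaLimitSet f x) := by
  intro a ha b hb ε hε
  -- uniform continuity
  obtain ⟨δ, hδ, hδf⟩ := Metric.uniformContinuous_iff.mp
    (CompactSpace.uniformContinuous_of_continuous hf) (ε / 2) (by linarith)
  set η := min δ (ε / 2) with hηdef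
  have hη : 0 < η := lt_min hδ (by linarith)
  obtain ⟨N, hN⟩ := orbit_near_omega f x hη
  -- pick m ≥ N with dist (f^[m] x) a < η
  have haΩ := ha
  obtain ⟨φa, hφa, hta⟩ := ha
  obtain ⟨J, hJ⟩ := Metric.tendsto_atTop.mp hta η hη
  set j := max J N with hj
  set m := φa j with hm
  have hmN : N ≤ m := le_trans (le_max_right J N) (hφa.le_apply)
  have hma : dist (f^[m] x) a < η := hJ j (le_max_left J N)
  -- pick k ≥ m + 1 with dist (f^[k] x) b < ε/2
  obtain ⟨φb, hφb, htb⟩ := hb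
  obtain ⟨J', hJ'⟩ := Metric.tendsto_atTop.mp htb (ε / 2) (by linarith)
  set j' := max J' (m + 1) with hj'
  set k := φb j' with hk
  have hkm : m + 1 ≤ k := le_trans (le_max_right J' (m + 1)) (hφb.le_apply)
  have hkb : dist (f^[k] x) b < ε / 2 := hJ' j' (le_max_left J' (m + 1))
  -- chain points
  choose g hgΩ hgd using fun i : ℕ => hN (m + i) (le_add_right hmN)
  set c : ℕ → X := fun i => if i = 0 then a else g i with hc
  have hci : ∀ i, dist (c i) (f^[m + i] x) < η := by
    intro i
    by_cases h0 : i = 0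
    · simp [hc, h0, dist_comm] at hma ⊢; simpa [h0] using hma
    · simp only [hc, if_neg h0]
      rw [dist_comm]; exact hgd i
  have hstep : ∀ i, dist (f (c i)) (f^[m + i + 1] x) < ε / 2 := by
    intro i
    have h1 : dist (c i) (f^[m + i] x) < δ := lt_of_lt_of_le (hci i) (min_le_left _ _)
    have h2 := hδf h1
    have heq : f^[m + i + 1] x = f (f^[m + i] x) := Function.iterate_succ_apply' f (m + i) x
    rw [heq]; exact h2
  refine ⟨k - m, fun i => c i, ?_, by simp [hc], ?_, ?_, ?_⟩
  · omega
  · intro i _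
    by_cases h0 : i = 0
    · simpa [hc, h0] using haΩ
    · simpa [hc, h0] using hgΩ i
  · intro i hi
    have h1 := hstep i
    have h2 : dist (f^[m + i + 1] x) (c (i + 1)) < ε / 2 := by
      have := hci (i + 1)
      rw [dist_comm] at this
      calc dist (f^[m + i + 1] x) (c (i+1)) = dist (f^[m + (i+1)] x) (c (i+1)) := by ring_nf
        _ < η := this
        _ ≤ ε / 2 := min_le_right _ _
    calc dist (f (c i)) (c (i + 1))
        ≤ dist (f (c i)) (f^[m + i + 1] x) + dist (f^[m + i + 1] x) (c (i + 1)) :=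
          dist_triangle _ _ _
      _ < ε / 2 + ε / 2 := add_lt_add h1 h2
      _ = ε := by ring
  · have h1 := hstep (k - m - 1)
    have hkey : m + (k - m - 1) + 1 = k := by omega
    rw [hkey] at h1
    calc dist (f (c (k - m - 1))) b ≤ dist (f (c (k - m - 1))) (f^[k] x) + dist (f^[k] x) b :=
          dist_triangle _ _ _
      _ < ε / 2 + ε / 2 := add_lt_add h1 hkb
      _ = ε := by ring
end

section
/- If (X,f) is positively expansive and has the exponential shadowing property with exponent λ, then for every ε > 0 there exists δ > 0 such that every δ-limit-pseudo-orbit {x_n, i_n}_{n=1}^∞ is simultaneously (ε,λ)-shadowed and limit-shadowed by a single point y ∈ X. -/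
open Filter

/-- `(X, f)` is positively expansive with expansive constant `e`. -/
def PosExpansiveWith {X : Type*} [MetricSpace X] (f : X → X) (e : ℝ) : Prop :=
  0 < e ∧ ∀ x y : X, x ≠ y → ∃ i : ℕ, e < dist (f^[i] x) (f^[i] y)

/-- `{x n, L n}` is a δ-pseudo-orbit (of orbit segments): `dist (f^[L n] (x n)) (x (n+1)) < δ`. -/
def SegPseudoOrbit {X : Type*} [MetricSpace X] (f : X → X) (δ : ℝ)
    (x : ℕ → X) (L : ℕ → ℕ) : Prop :=
  ∀ n, dist (f^[L n] (x n)) (x (n + 1)) < δ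

/-- A δ-limit-pseudo-orbit: a δ-pseudo-orbit whose gaps tend to `0`. -/
def SegLimitPseudoOrbit {X : Type*} [MetricSpace X] (f : X → X) (δ : ℝ)
    (x : ℕ → X) (L : ℕ → ℕ) : Prop :=
  SegPseudoOrbit f δ x L ∧
    Tendsto (fun n => dist (f^[L n] (x n)) (x (n + 1))) atTop (nhds 0)

/-- `c n = ∑_{m<n} L m`, the starting time of the `n`-th orbit segment. -/
def segStart (L : ℕ → ℕ) (n : ℕ) : ℕ := ∑ m ∈ Finset.range n, L m

/-- `y` exponentially `(ε, λ)`-shadows the pseudo-orbit `{x n, L n}`: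
`dist (f^[c n + j] y) (f^[j] (x n)) < ε · exp(−min{j, L n − 1 − j}·λ)` for `0 ≤ j < L n`. -/
def ExpShadows {X : Type*} [MetricSpace X] (f : X → X) (ε lam : ℝ) (y : X)
    (x : ℕ → X) (L : ℕ → ℕ) : Prop :=
  ∀ n : ℕ, ∀ j < L n,
    dist (f^[segStart L n + j] y) (f^[j] (x n)) <
      ε * Real.exp (-(min j (L n - 1 - j) : ℕ) * lam)

/-- `y` limit-shadows `{x n, L n}`: the shadowing errors tend to `0` along the
concatenated orbit. -/
def LimitShadowsSeg {X : Type*} [MetricSpace X] (f : X → X) (y : X)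
    (x : ℕ → X) (L : ℕ → ℕ) : Prop :=
  ∀ η : ℝ, 0 < η → ∃ N : ℕ, ∀ n ≥ N, ∀ j < L n,
    dist (f^[segStart L n + j] y) (f^[j] (x n)) < η

/-- `(X, f)` has the exponential shadowing property with exponent `λ`. -/
def ExpShadowingProperty {X : Type*} [MetricSpace X] (f : X → X) (lam : ℝ) : Prop :=
  ∀ ε : ℝ, 0 < ε → ∃ δ : ℝ, 0 < δ ∧ ∀ (x : ℕ → X) (L : ℕ → ℕ), (∀ n, 1 ≤ L n) →
    SegPseudoOrbit f δ x L → ∃ y : X, ExpShadows f ε lam y x L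


lemma segStart_succ' (L : ℕ → ℕ) (n : ℕ) : segStart L (n+1) = segStart L n + L n :=
  Finset.sum_range_succ _ _

lemma segStart_add' (L : ℕ → ℕ) (K n : ℕ) :
    segStart L (K + n) = segStart L K + segStart (fun m => L (K + m)) n := by
  induction n with
  | zero => simp [segStart]
  | succ n ih =>
    rw [show K + (n+1) = (K+n)+1 from rfl, segStart_succ', ih, segStart_succ']
    omega

lemma exists_decomp' (L : ℕ → ℕ) (hL : ∀ n, 1 ≤ L n) (m : ℕ) :
    ∃ n j, j < L n ∧ m = segStart L n + j := by
  induction m with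
  | zero => exact ⟨0, 0, hL 0, by simp [segStart]⟩
  | succ m ih =>
    obtain ⟨n, j, hj, rfl⟩ := ih
    by_cases h : j + 1 < L n
    · exact ⟨n, j + 1, h, rfl⟩
    · exact ⟨n + 1, 0, hL _, by rw [segStart_succ']; omega⟩

lemma unifExp' {X : Type*} [MetricSpace X] [CompactSpace X] (f : X → X) (hf : Continuous f)
    {e : ℝ} (hexp : PosExpansiveWith f e) (η : ℝ) (hη : 0 < η) :
    ∃ N : ℕ, ∀ a b : X, (∀ i ≤ N, dist (f^[i] a) (f^[i] b) ≤ e) → dist a b ≤ η := by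
  have hS : IsCompact {p : X × X | η ≤ dist p.1 p.2} := by
    apply IsClosed.isCompact
    exact isClosed_le continuous_const (continuous_fst.dist continuous_snd)
  have hcov : {p : X × X | η ≤ dist p.1 p.2} ⊆
      ⋃ i : ℕ, {p : X × X | e < dist (f^[i] p.1) (f^[i] p.2)} := by
    intro p hp
    have hne : p.1 ≠ p.2 := by
      intro h
      have hp' : η ≤ dist p.1 p.2 := hp
      rw [h, dist_self] at hp'
      linarith
    obtain ⟨i, hi⟩ := hexp.2 p.1 p.2 hne
    exact Set.mem_iUnion.2 ⟨i, hi⟩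
  obtain ⟨t, ht⟩ := hS.elim_finite_subcover _
    (fun i => isOpen_lt continuous_const (((hf.iterate i).comp continuous_fst).dist
      ((hf.iterate i).comp continuous_snd))) hcov
  refine ⟨t.sup id, fun a b hab => ?_⟩
  by_contra h
  push_neg at h
  have hm : (a, b) ∈ ⋃ i ∈ t, {p : X × X | e < dist (f^[i] p.1) (f^[i] p.2)} := ht h.le
  obtain ⟨i, hit, hi⟩ := Set.mem_iUnion₂.1 hm
  exact absurd (hab i (Finset.le_sup (f := id) hit)) (not_le.2 hi)

lemma exp_factor_le_one' (lam : ℝ) (hlam : 0 < lam) (k : ℕ) :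
    Real.exp (-(k : ℝ) * lam) ≤ 1 := by
  rw [Real.exp_le_one_iff]
  have : (0:ℝ) ≤ (k:ℝ) := Nat.cast_nonneg _
  nlinarith

lemma expShadows_plain' {X : Type*} [MetricSpace X] (f : X → X) {ε lam : ℝ}
    (hε : 0 < ε) (hlam : 0 < lam) {y : X} {x : ℕ → X} {L : ℕ → ℕ}
    (h : ExpShadows f ε lam y x L) :
    ∀ n : ℕ, ∀ j < L n, dist (f^[segStart L n + j] y) (f^[j] (x n)) < ε := by
  intro n j hj
  calc dist (f^[segStart L n + j] y) (f^[j] (x n))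
      < ε * Real.exp (-(min j (L n - 1 - j) : ℕ) * lam) := h n j hj
    _ ≤ ε * 1 := mul_le_mul_of_nonneg_left (exp_factor_le_one' lam hlam _) hε.le
    _ = ε := mul_one ε

theorem stmt8 {X : Type*} [MetricSpace X] [CompactSpace X] (f : X → X) (hf : Continuous f)
    (e : ℝ) (hexp : PosExpansiveWith f e) (lam : ℝ) (hlam : 0 < lam)
    (hshad : ExpShadowingProperty f lam) :
    ∀ ε : ℝ, 0 < ε → ∃ δ : ℝ, 0 < δ ∧ ∀ (x : ℕ → X) (L : ℕ → ℕ), (∀ n, 1 ≤ L n) →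
      SegLimitPseudoOrbit f δ x L →
        ∃ y : X, ExpShadows f ε lam y x L ∧ LimitShadowsSeg f y x L := by
  obtain ⟨he, hexp2⟩ := hexp
  intro ε hε
  set ε₀ := min ε (e/3) with hε₀def
  have hε₀ : 0 < ε₀ := lt_min hε (by linarith)
  obtain ⟨δ, hδ, H⟩ := hshad ε₀ hε₀
  refine ⟨δ, hδ, fun x L hL hpo => ?_⟩
  obtain ⟨hpo1, hpo2⟩ := hpo
  obtain ⟨y, hy⟩ := H x L hL hpo1
  have hyplain : ∀ n, ∀ j < L n, dist (f^[segStart L n + j] y) (f^[j] (x n)) < ε₀ :=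
    expShadows_plain' f hε₀ hlam hy
  refine ⟨y, ?_, ?_⟩
  · intro n j hj
    calc dist (f^[segStart L n + j] y) (f^[j] (x n))
        < ε₀ * Real.exp (-(min j (L n - 1 - j) : ℕ) * lam) := hy n j hj
      _ ≤ ε * Real.exp (-(min j (L n - 1 - j) : ℕ) * lam) :=
          mul_le_mul_of_nonneg_right (min_le_left _ _) (Real.exp_pos _).le
  · intro η hη
    set ε' := min (η/3) (e/3) with hε'def
    have hε' : 0 < ε' := lt_min (by linarith) (by linarith)
    obtain ⟨δ', hδ', H'⟩ := hshad ε' hε'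
    obtain ⟨K, hK⟩ := Metric.tendsto_atTop.mp hpo2 δ' hδ'
    set x' : ℕ → X := fun m => x (K + m) with hx'def
    set L' : ℕ → ℕ := fun m => L (K + m) with hL'def
    have hpo' : SegPseudoOrbit f δ' x' L' := by
      intro n
      have h1 := hK (K + n) (by omega)
      rw [Real.dist_eq, sub_zero, abs_of_nonneg dist_nonneg] at h1
      exact h1
    obtain ⟨z, hz⟩ := H' x' L' (fun n => hL _) hpo'
    have hzplain := expShadows_plain' f hε' hlam hz
    obtain ⟨Nu, hNu⟩ := unifExp' f hf ⟨he, hexp2⟩ (η/3) (by linarith)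
    set w := f^[segStart L K] y with hwdef
    have hiter : ∀ n j : ℕ, f^[segStart L' n + j] w = f^[segStart L (K + n) + j] y := by
      intro n j
      rw [hwdef, ← Function.iterate_add_apply, segStart_add' L K n, ← hL'def]
      congr 1
      omega
    have key : ∀ m, dist (f^[m] w) (f^[m] z) ≤ ε₀ + ε' := by
      intro m
      obtain ⟨n, j, hj, rfl⟩ := exists_decomp' L' (fun n => hL _) m
      have h1 : dist (f^[segStart L' n + j] w) (f^[j] (x' n)) < ε₀ := by
        rw [hiter n j]
        exact hyplain (K + n) j hj
      have h2 : dist (f^[segStart L' n + j] z) (f^[j] (x' n)) < ε' := hzplain n j hj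
      calc dist (f^[segStart L' n + j] w) (f^[segStart L' n + j] z)
          ≤ dist (f^[segStart L' n + j] w) (f^[j] (x' n))
            + dist (f^[segStart L' n + j] z) (f^[j] (x' n)) := dist_triangle_right _ _ _
        _ ≤ ε₀ + ε' := by linarith
    have key2 : ∀ m, dist (f^[m] w) (f^[m] z) ≤ η/3 := by
      intro m
      apply hNu
      intro i _
      have h5 : dist (f^[i + m] w) (f^[i + m] z) ≤ e := by
        calc dist (f^[i + m] w) (f^[i + m] z) ≤ ε₀ + ε' := key _
          _ ≤ e := by
              have h1 : ε₀ ≤ e/3 := min_le_right _ _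
              have h2 : ε' ≤ e/3 := min_le_right _ _
              linarith
      rw [Function.iterate_add_apply, Function.iterate_add_apply] at h5
      exact h5
    refine ⟨K, fun n hn j hj => ?_⟩
    obtain ⟨n', rfl⟩ : ∃ n', n = K + n' := ⟨n - K, by omega⟩
    rw [← hiter n' j]
    have h2 : dist (f^[segStart L' n' + j] z) (f^[j] (x' n')) < ε' := hzplain n' j hj
    have h3 := key2 (segStart L' n' + j)
    have h4 : ε' ≤ η/3 := min_le_left _ _
    calc dist (f^[segStart L' n' + j] w) (f^[j] (x (K + n')))
        ≤ dist (f^[segStart L' n' + j] w) (f^[segStart L' n' + j] z)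
          + dist (f^[segStart L' n' + j] z) (f^[j] (x' n')) := dist_triangle _ _ _
      _ < η := by linarith
end

section
/- Let (X,f) be a dynamical system with the metric on X induced from the Pfister–Sullivan metric on measures, and let y ∈ X, (α_k) a sequence of invariant measures, and (n_k), (N_k) positive integer sequences with N_k strictly increasing and n_{k+1} ≤ τ_k Σ_{j≤k} n_j N_j and Σ_{j<k} n_j N_j ≤ τ_k Σ_{j≤k} n_j N_j for some τ_k → 0. If along the subsequence M_k = m + Σ-partial sums of the stretched lengths one has d(E_{M_k}(y), α'_{M_k}) → 0, where α' is the stretched sequence of the α_k, then the limit point set of (E_n(y))_{n≥1} equals the limit point set of (α_k). -/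
open Filter MeasureTheory

/-- The Pfister–Sullivan distance between two measures, induced by a countable family
`g k : X → [0,1]` of continuous functions (compatible with the weak* topology when the
family is separating, and satisfying `d(μ,ν) ≤ 2`). -/
noncomputable def PSdist {X : Type*} [TopologicalSpace X] [MeasurableSpace X]
    (g : ℕ → C(X, ℝ)) (μ ν : Measure X) : ℝ :=
  ∑' k : ℕ, (2 : ℝ)⁻¹ ^ (k + 1) * |(∫ x, g k x ∂μ) - ∫ x, g k x ∂ν|

/-- The empirical measure `E_n(y) = (1/n) ∑_{i<n} δ_{f^i y}`. -/
noncomputable def empiricalMeasure {X : Type*} [TopologicalSpace X] [MeasurableSpace X]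
    (f : X → X) (y : X) (n : ℕ) : Measure X :=
  (n : ENNReal)⁻¹ • ∑ i ∈ Finset.range n, Measure.dirac (f^[i] y)

section Aux

variable {X : Type*} [TopologicalSpace X] [MeasurableSpace X]

lemma ps_summable_aux (g : ℕ → C(X, ℝ)) (μ ν : Measure X) {C : ℝ}
    (h : ∀ k, |(∫ x, g k x ∂μ) - ∫ x, g k x ∂ν| ≤ C) :
    Summable (fun k => (2 : ℝ)⁻¹ ^ (k + 1) * |(∫ x, g k x ∂μ) - ∫ x, g k x ∂ν|) := by
  apply Summable.of_nonneg_of_le (fun k => by positivity) (fun k => ?_)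
    ((summable_geometric_of_lt_one (by norm_num : (0:ℝ) ≤ 2⁻¹) (by norm_num)).mul_right
      (2⁻¹ * C))
  calc (2 : ℝ)⁻¹ ^ (k + 1) * |(∫ x, g k x ∂μ) - ∫ x, g k x ∂ν|
      ≤ (2 : ℝ)⁻¹ ^ (k + 1) * C := mul_le_mul_of_nonneg_left (h k) (by positivity)
    _ = (2 : ℝ)⁻¹ ^ k * (2⁻¹ * C) := by ring

lemma ps_tsum_geom : ∑' k : ℕ, (2 : ℝ)⁻¹ ^ (k + 1) = 1 := by
  have h : ∀ k : ℕ, (2 : ℝ)⁻¹ ^ (k + 1) = (2:ℝ)⁻¹ ^ k * 2⁻¹ := fun k => pow_succ _ _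
  rw [tsum_congr h, tsum_mul_right,
    tsum_geometric_of_lt_one (by norm_num : (0:ℝ) ≤ 2⁻¹) (by norm_num)]
  norm_num

lemma PSdist_nonneg (g : ℕ → C(X, ℝ)) (μ ν : Measure X) : 0 ≤ PSdist g μ ν :=
  tsum_nonneg fun k => by positivity

lemma PSdist_comm (g : ℕ → C(X, ℝ)) (μ ν : Measure X) : PSdist g μ ν = PSdist g ν μ :=
  tsum_congr fun k => by rw [abs_sub_comm]

lemma PSdist_le (g : ℕ → C(X, ℝ)) {μ ν : Measure X} {C : ℝ} (hC : 0 ≤ C)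
    (h : ∀ k, |(∫ x, g k x ∂μ) - ∫ x, g k x ∂ν| ≤ C) : PSdist g μ ν ≤ C := by
  have hs : Summable (fun k : ℕ => (2 : ℝ)⁻¹ ^ (k + 1) * C) := by
    simpa [pow_succ, mul_assoc] using
      (summable_geometric_of_lt_one (by norm_num : (0:ℝ) ≤ 2⁻¹) (by norm_num)).mul_right
        (2⁻¹ * C)
  calc PSdist g μ ν ≤ ∑' k : ℕ, (2 : ℝ)⁻¹ ^ (k + 1) * C :=
        Summable.tsum_le_tsum (fun k => mul_le_mul_of_nonneg_left (h k) (by positivity))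
          (ps_summable_aux g μ ν h) hs
    _ = (∑' k : ℕ, (2 : ℝ)⁻¹ ^ (k + 1)) * C := tsum_mul_right
    _ = C := by rw [ps_tsum_geom, one_mul]

lemma PSdist_triangle (g : ℕ → C(X, ℝ)) {μ ν ρ : Measure X}
    (h1 : ∀ k, |(∫ x, g k x ∂μ) - ∫ x, g k x ∂ν| ≤ 2)
    (h2 : ∀ k, |(∫ x, g k x ∂ν) - ∫ x, g k x ∂ρ| ≤ 2) :
    PSdist g μ ρ ≤ PSdist g μ ν + PSdist g ν ρ := by
  have h3 : ∀ k, |(∫ x, g k x ∂μ) - ∫ x, g k x ∂ρ| ≤ 4 := fun k => by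
    have := abs_sub_le (∫ x, g k x ∂μ) (∫ x, g k x ∂ν) (∫ x, g k x ∂ρ)
    linarith [h1 k, h2 k]
  unfold PSdist
  rw [← Summable.tsum_add (ps_summable_aux g μ ν h1) (ps_summable_aux g ν ρ h2)]
  refine Summable.tsum_le_tsum (fun k => ?_) (ps_summable_aux g μ ρ h3)
    ((ps_summable_aux g μ ν h1).add (ps_summable_aux g ν ρ h2))
  rw [← mul_add]
  exact mul_le_mul_of_nonneg_left (abs_sub_le _ _ _) (by positivity)

variable [OpensMeasurableSpace X]

lemma cont_integrable (h : C(X, ℝ)) (hb : ∀ x, h x ∈ Set.Icc (0:ℝ) 1) (μ : Measure X)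
    [IsFiniteMeasure μ] : Integrable h μ := by
  refine ⟨h.continuous.aestronglyMeasurable, ?_⟩
  apply HasFiniteIntegral.of_bounded (C := 1)
  filter_upwards with x
  rw [Real.norm_eq_abs, abs_le]
  exact ⟨by linarith [(hb x).1], (hb x).2⟩

lemma integral_prob_mem_Icc (h : C(X, ℝ)) (hb : ∀ x, h x ∈ Set.Icc (0:ℝ) 1) (μ : Measure X)
    [IsProbabilityMeasure μ] : (∫ x, h x ∂μ) ∈ Set.Icc (0:ℝ) 1 := by
  constructor
  · exact integral_nonneg fun x => (hb x).1
  · calc ∫ x, h x ∂μ ≤ ∫ _, (1:ℝ) ∂μ :=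
        integral_mono (cont_integrable h hb μ) (integrable_const 1) fun x => (hb x).2
    _ = 1 := by simp

lemma integral_empirical (h : C(X, ℝ)) (hb : ∀ x, h x ∈ Set.Icc (0:ℝ) 1) (f : X → X) (y : X)
    (n : ℕ) :
    (∫ x, h x ∂(empiricalMeasure f y n)) = (n:ℝ)⁻¹ * ∑ i ∈ Finset.range n, h (f^[i] y) := by
  unfold empiricalMeasure
  rw [integral_smul_measure, integral_finset_sum_measure
    (fun i _ => cont_integrable h hb (Measure.dirac (f^[i] y)))]
  simp only [integral_dirac' _ _ h.continuous.stronglyMeasurable]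
  rw [smul_eq_mul]
  congr 1
  simp [ENNReal.toReal_inv]

lemma integral_empirical_mem_Icc (h : C(X, ℝ)) (hb : ∀ x, h x ∈ Set.Icc (0:ℝ) 1) (f : X → X)
    (y : X) {n : ℕ} (hn : 1 ≤ n) :
    (∫ x, h x ∂(empiricalMeasure f y n)) ∈ Set.Icc (0:ℝ) 1 := by
  rw [integral_empirical h hb f y n]
  have hn' : (0:ℝ) < n := by exact_mod_cast hn
  have h1 : (0:ℝ) ≤ ∑ i ∈ Finset.range n, h (f^[i] y) :=
    Finset.sum_nonneg fun i _ => (hb _).1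
  have h2 : ∑ i ∈ Finset.range n, h (f^[i] y) ≤ (n:ℝ) := by
    calc ∑ i ∈ Finset.range n, h (f^[i] y) ≤ ∑ _i ∈ Finset.range n, (1:ℝ) :=
          Finset.sum_le_sum fun i _ => (hb _).2
      _ = (n:ℝ) := by simp
  constructor
  · positivity
  · rw [inv_mul_le_one₀ hn']
    exact h2

lemma psdist_empirical_le (g : ℕ → C(X, ℝ)) (hg01 : ∀ k x, g k x ∈ Set.Icc (0:ℝ) 1)
    (f : X → X) (y : X) {a b : ℕ} (ha : 1 ≤ a) (hab : a ≤ b) :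
    PSdist g (empiricalMeasure f y b) (empiricalMeasure f y a) ≤ 2 * ((b:ℝ) - a) / a := by
  have haR : (1:ℝ) ≤ a := by exact_mod_cast ha
  have habR : (a:ℝ) ≤ b := by exact_mod_cast hab
  refine PSdist_le g (div_nonneg (by linarith) (by linarith)) (fun k => ?_)
  rw [integral_empirical (g k) (hg01 k) f y, integral_empirical (g k) (hg01 k) f y]
  set u : ℕ → ℝ := fun i => g k (f^[i] y) with hu
  have hsplit : ∑ i ∈ Finset.range b, u i
      = ∑ i ∈ Finset.range a, u i + ∑ i ∈ Finset.range (b - a), u (a + i) := by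
    have h0 := Finset.sum_range_add u a (b - a)
    rwa [Nat.add_sub_cancel' hab] at h0
  set A := ∑ i ∈ Finset.range a, u i with hA
  set B := ∑ i ∈ Finset.range (b - a), u (a + i) with hB
  have hA0 : 0 ≤ A := Finset.sum_nonneg fun i _ => (hg01 k _).1
  have hAa : A ≤ (a:ℝ) := by
    calc A ≤ ∑ _i ∈ Finset.range a, (1:ℝ) := Finset.sum_le_sum fun i _ => (hg01 k _).2
      _ = (a:ℝ) := by simp
  have hB0 : 0 ≤ B := Finset.sum_nonneg fun i _ => (hg01 k _).1
  have hBb : B ≤ (b:ℝ) - a := by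
    calc B ≤ ∑ _i ∈ Finset.range (b - a), (1:ℝ) := Finset.sum_le_sum fun i _ => (hg01 k _).2
      _ = ((b - a : ℕ) : ℝ) := by simp
      _ = (b:ℝ) - a := by push_cast [hab]; ring
  rw [hsplit]
  have ha0 : (0:ℝ) < a := by linarith
  have hb0 : (0:ℝ) < b := by linarith
  have hab0 : (0:ℝ) < (a:ℝ) * b := by positivity
  rw [show (b:ℝ)⁻¹ * (A + B) - (a:ℝ)⁻¹ * A = ((A + B) * a - A * b) / ((a:ℝ) * b) by
    field_simp, abs_div, abs_of_pos hab0, div_le_iff₀ hab0]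
  have hgoal : 2 * ((b:ℝ) - a) / a * (a * b) = 2 * ((b:ℝ) - a) * b := by
    field_simp
  rw [hgoal, abs_le]
  constructor <;>
    nlinarith [mul_le_mul_of_nonneg_right hAa (show (0:ℝ) ≤ (b:ℝ) - a by linarith),
      mul_le_mul_of_nonneg_right hBb (show (0:ℝ) ≤ (a:ℝ) by linarith),
      mul_nonneg hB0 (show (0:ℝ) ≤ (a:ℝ) by linarith),
      mul_nonneg hA0 (show (0:ℝ) ≤ (b:ℝ) - a by linarith)]

lemma exists_strictMono_subseq {c : ℕ → ℕ} (hc : Tendsto c atTop atTop) :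
    ∃ ψ : ℕ → ℕ, StrictMono ψ ∧ StrictMono (c ∘ ψ) := by
  have key : ∀ i : ℕ, ∃ j, i < j ∧ c i < c j := by
    intro i
    rcases ((hc.eventually (eventually_gt_atTop (c i))).and (eventually_gt_atTop i)).exists
      with ⟨j, hj1, hj2⟩
    exact ⟨j, hj2, hj1⟩
  choose F hF1 hF2 using key
  refine ⟨fun t => F^[t] 0, ?_, ?_⟩ <;> apply strictMono_nat_of_lt_succ <;> intro t
  · rw [Function.iterate_succ_apply']
    exact hF1 _
  · show c (F^[t] 0) < c (F^[t+1] 0)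
    rw [Function.iterate_succ_apply']
    exact hF2 _

end Aux

section Blocks

def Psum (N : ℕ → ℕ) (c : ℕ) : ℕ := ∑ j ∈ Finset.range c, N j

def Ssum (n N : ℕ → ℕ) (c : ℕ) : ℕ := ∑ j ∈ Finset.range c, n j * N j

def blk (N : ℕ → ℕ) (k : ℕ) : ℕ := Nat.findGreatest (fun c => Psum N c ≤ k) k

variable {n N : ℕ → ℕ}

lemma Psum_succ (c : ℕ) : Psum N (c + 1) = Psum N c + N c := Finset.sum_range_succ _ _

lemma Ssum_succ (c : ℕ) : Ssum n N (c + 1) = Ssum n N c + n c * N c := Finset.sum_range_succ _ _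

lemma Psum_strictMono (hN : ∀ j, 0 < N j) : StrictMono (Psum N) :=
  strictMono_nat_of_lt_succ fun c => by rw [Psum_succ]; have := hN c; omega

lemma Psum_le_self (hN : ∀ j, 0 < N j) (c : ℕ) : c ≤ Psum N c :=
  (Psum_strictMono hN).le_apply

lemma blk_le (k : ℕ) : Psum N (blk N k) ≤ k := by
  have h : (fun c => Psum N c ≤ k) 0 := by simp [Psum]
  exact Nat.findGreatest_spec (P := fun c => Psum N c ≤ k) (Nat.zero_le k) h

lemma le_blk (hN : ∀ j, 0 < N j) {c k : ℕ} (h : Psum N c ≤ k) : c ≤ blk N k :=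
  Nat.le_findGreatest (le_trans (Psum_le_self hN c) h) h

lemma blk_lt (hN : ∀ j, 0 < N j) (k : ℕ) : k < Psum N (blk N k + 1) := by
  by_contra hcon
  push_neg at hcon
  exact Nat.findGreatest_is_greatest (Nat.lt_succ_self _)
    (le_trans (Psum_le_self hN _) hcon) hcon

lemma blk_eq (hN : ∀ j, 0 < N j) {c k : ℕ} (h1 : Psum N c ≤ k) (h2 : k < Psum N (c + 1)) :
    blk N k = c := by
  refine le_antisymm ?_ (le_blk hN h1)
  by_contra hcon
  push_neg at hcon
  have h3 : Psum N (c + 1) ≤ Psum N (blk N k) :=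
    (Psum_strictMono hN).monotone (Nat.succ_le_of_lt hcon)
  have h4 := blk_le (N := N) k
  omega

lemma blk_tendsto (hN : ∀ j, 0 < N j) : Tendsto (blk N) atTop atTop :=
  tendsto_atTop_atTop.2 fun c => ⟨Psum N c, fun _ hk => le_blk hN hk⟩

end Blocks

/-- The limit point set of a sequence of measures, w.r.t. the Pfister–Sullivan metric. -/
def limitPointSet {X : Type*} [TopologicalSpace X] [MeasurableSpace X]
    (g : ℕ → C(X, ℝ)) (s : ℕ → Measure X) : Set (Measure X) :=
  {μ | IsProbabilityMeasure μ ∧ ∃ φ : ℕ → ℕ, StrictMono φ ∧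
    Tendsto (fun k => PSdist g (s (φ k)) μ) atTop (nhds 0)}

theorem stmt14 {X : Type*} [MetricSpace X] [CompactSpace X] [MeasurableSpace X] [BorelSpace X]
    (f : X → X) (hf : Continuous f)
    (g : ℕ → C(X, ℝ)) (hg01 : ∀ k x, g k x ∈ Set.Icc (0 : ℝ) 1)
    (hsep : ∀ x y : X, x ≠ y → ∃ k, g k x ≠ g k y)
    (hdX : ∀ x y : X, dist x y = PSdist g (Measure.dirac x) (Measure.dirac y))
    (y : X) (m : ℕ)
    -- the sequence (α_k) of invariant measures
    (α : ℕ → Measure X) (hαprob : ∀ k, IsProbabilityMeasure (α k))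
    (hαinv : ∀ k, MeasurePreserving f (α k) (α k))
    -- the block data
    (n N : ℕ → ℕ) (hn : ∀ j, 0 < n j) (hNpos : ∀ j, 0 < N j) (hNmono : StrictMono N)
    (τ : ℕ → ℝ) (hτ0 : ∀ k, 0 ≤ τ k) (hτ : Tendsto τ atTop (nhds 0))
    (hblock1 : ∀ k, (n (k + 1) : ℝ) ≤
      τ k * ∑ j ∈ Finset.range (k + 1), (n j : ℝ) * (N j : ℝ))
    (hblock2 : ∀ k, (∑ j ∈ Finset.range k, (n j : ℝ) * (N j : ℝ)) ≤
      τ k * ∑ j ∈ Finset.range (k + 1), (n j : ℝ) * (N j : ℝ))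
    -- the stretched sequence α' of the α_k
    (α' : ℕ → Measure X)
    (hα'start : ∀ l ≤ m, α' l = α 0)
    (hα'block : ∀ k l, m + (∑ j ∈ Finset.range k, n j * N j) < l →
      l ≤ m + (∑ j ∈ Finset.range (k + 1), n j * N j) → α' l = α k)
    -- the stretched sequence n' of the lengths n_k
    (n' : ℕ → ℕ)
    (hn' : ∀ k l, (∑ j ∈ Finset.range k, N j) ≤ l → l < (∑ j ∈ Finset.range (k + 1), N j) →
      n' l = n k)
    -- the partial-sum times M_k of the stretched lengths
    (M : ℕ → ℕ) (hM : ∀ k, M k = m + ∑ l ∈ Finset.range (k + 1), n' l)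
    -- convergence along the subsequence M_k
    (hconv : Tendsto (fun k => PSdist g (empiricalMeasure f y (M k)) (α' (M k)))
      atTop (nhds 0)) :
    limitPointSet g (empiricalMeasure f y) = limitPointSet g α := by
  classical
  -- basic block facts
  have hn'val : ∀ k, n' k = n (blk N k) := fun k =>
    hn' (blk N k) k (blk_le k) (blk_lt hNpos k)
  have hn'pos : ∀ k, 0 < n' k := fun k => by rw [hn'val k]; exact hn _
  have hSsum' : ∀ c, ∑ l ∈ Finset.range (Psum N c), n' l = Ssum n N c := by
    intro c
    induction c with
    | zero => simp [Psum, Ssum]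
    | succ c ih =>
      have hval : ∀ i ∈ Finset.range (N c), n' (Psum N c + i) = n c := by
        intro i hi
        refine hn' c _ (Nat.le_add_right _ _) ?_
        have h1 := Finset.mem_range.1 hi
        show Psum N c + i < Psum N (c + 1)
        rw [Psum_succ]
        omega
      rw [Psum_succ, Finset.sum_range_add, ih, Ssum_succ,
        Finset.sum_congr rfl hval, Finset.sum_const, Finset.card_range, smul_eq_mul, mul_comm]
  have hMform : ∀ k, M k = m + Ssum n N (blk N k)
      + (k + 1 - Psum N (blk N k)) * n (blk N k) := by
    intro k
    have hle := blk_le (N := N) k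
    have h0 := Finset.sum_range_add n' (Psum N (blk N k)) (k + 1 - Psum N (blk N k))
    rw [Nat.add_sub_cancel' (by omega : Psum N (blk N k) ≤ k + 1)] at h0
    have hval : ∀ i ∈ Finset.range (k + 1 - Psum N (blk N k)),
        n' (Psum N (blk N k) + i) = n (blk N k) := by
      intro i hi
      refine hn' (blk N k) _ (Nat.le_add_right _ _) ?_
      have h1 := blk_lt hNpos k
      have h2 := Finset.mem_range.1 hi
      show Psum N (blk N k) + i < Psum N (blk N k + 1)
      omega
    rw [hM k, h0, hSsum', Finset.sum_congr rfl hval, Finset.sum_const, Finset.card_range,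
      smul_eq_mul, mul_comm, ← add_assoc]
  have hMsucc : ∀ k, M (k + 1) = M k + n' (k + 1) := by
    intro k
    rw [hM (k + 1), hM k, Finset.sum_range_succ]
    omega
  have hMmono : StrictMono M := strictMono_nat_of_lt_succ fun k => by
    have := hn'pos (k + 1)
    rw [hMsucc k]
    omega
  have hMk : ∀ k, k ≤ M k := fun k => hMmono.le_apply
  have hM1 : ∀ k, 1 ≤ M k := fun k => by
    have h0 : 0 < ∑ l ∈ Finset.range (k + 1), n' l :=
      Finset.sum_pos (fun l _ => hn'pos l) ⟨0, Finset.mem_range.2 (Nat.succ_pos k)⟩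
    rw [hM k]
    omega
  have hMlb : ∀ k, m + Ssum n N (blk N k) < M k := by
    intro k
    have h1 : 0 < k + 1 - Psum N (blk N k) := by have := blk_le (N := N) k; omega
    have h2 := Nat.mul_pos h1 (hn (blk N k))
    rw [hMform k]
    omega
  have hMub : ∀ k, M k ≤ m + Ssum n N (blk N k + 1) := by
    intro k
    have h1 : k + 1 - Psum N (blk N k) ≤ N (blk N k) := by
      have := blk_lt hNpos k
      rw [Psum_succ] at this
      omega
    have h2 : (k + 1 - Psum N (blk N k)) * n (blk N k) ≤ n (blk N k) * N (blk N k) := by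
      rw [mul_comm]
      exact Nat.mul_le_mul_left _ h1
    rw [hMform k, Ssum_succ]
    omega
  have hα'M : ∀ k, α' (M k) = α (blk N k) := fun k =>
    hα'block (blk N k) (M k) (hMlb k) (hMub k)
  have hendpoint : ∀ c, blk N (Psum N (c + 1) - 1) = c := by
    intro c
    have hNc := hNpos c
    have hPs := Psum_succ (N := N) c
    refine blk_eq hNpos ?_ ?_ <;> omega
  have hMend : ∀ c, M (Psum N (c + 1) - 1) = m + Ssum n N (c + 1) := by
    intro c
    have hNc := hNpos c
    have hPs := Psum_succ (N := N) c
    have hPle := Psum_le_self hNpos c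
    rw [hMform, hendpoint c,
      show Psum N (c + 1) - 1 + 1 - Psum N c = N c by omega, Ssum_succ]
    ring
  -- the map K : last index with M k ≤ nn
  set K : ℕ → ℕ := fun nn => Nat.findGreatest (fun k => M k ≤ nn) nn with hKdef
  have hKle : ∀ nn, M 0 ≤ nn → M (K nn) ≤ nn := by
    intro nn h
    exact Nat.findGreatest_spec (P := fun k => M k ≤ nn) (Nat.zero_le nn) h
  have hKlt : ∀ nn, nn < M (K nn + 1) := by
    intro nn
    by_contra hcon
    push_neg at hcon
    exact Nat.findGreatest_is_greatest (P := fun k => M k ≤ nn) (Nat.lt_succ_self _)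
      (le_trans (hMk _) hcon) hcon
  have hKge : ∀ k nn, M k ≤ nn → k ≤ K nn := fun k nn h =>
    Nat.le_findGreatest (le_trans (hMk k) h) h
  have hKtendsto : Tendsto K atTop atTop :=
    tendsto_atTop_atTop.2 fun k => ⟨M k, fun nn h => hKge k nn h⟩
  -- cast of Ssum
  have hScast : ∀ c, ((Ssum n N c : ℕ) : ℝ) = ∑ j ∈ Finset.range c, (n j : ℝ) * (N j : ℝ) := by
    intro c
    unfold Ssum
    push_cast
    ring
  -- gap estimate
  have hgap : ∀ k, 1 ≤ blk N k →
      (n' (k + 1) : ℝ) ≤ max (τ (blk N k - 1)) (τ (blk N k)) * (M k : ℝ) := by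
    intro k hc1
    have hMcast : (Ssum n N (blk N k) : ℝ) ≤ (M k : ℝ) := by
      have h := hMlb k
      exact_mod_cast Nat.le_of_lt (lt_of_le_of_lt (Nat.le_add_left _ m) h)
    by_cases hcase : k + 1 < Psum N (blk N k + 1)
    · have hb : blk N (k + 1) = blk N k :=
        blk_eq hNpos (le_trans (blk_le k) (Nat.le_succ k)) hcase
      rw [hn'val (k + 1), hb]
      have h1 := hblock1 (blk N k - 1)
      rw [Nat.sub_add_cancel hc1] at h1
      calc (n (blk N k) : ℝ)
          ≤ τ (blk N k - 1) * ∑ j ∈ Finset.range (blk N k), (n j : ℝ) * (N j : ℝ) := h1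
        _ = τ (blk N k - 1) * (Ssum n N (blk N k) : ℝ) := by rw [hScast]
        _ ≤ τ (blk N k - 1) * (M k : ℝ) := mul_le_mul_of_nonneg_left hMcast (hτ0 _)
        _ ≤ max (τ (blk N k - 1)) (τ (blk N k)) * (M k : ℝ) :=
            mul_le_mul_of_nonneg_right (le_max_left _ _) (Nat.cast_nonneg _)
    · push_neg at hcase
      have hblk := blk_lt hNpos k
      have hk1 : k = Psum N (blk N k + 1) - 1 := by omega
      have hMeq : M k = m + Ssum n N (blk N k + 1) := by
        have h := hMend (blk N k)
        rw [← hk1] at h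
        exact h
      have hb : blk N (k + 1) = blk N k + 1 := by
        refine blk_eq hNpos (by omega) ?_
        have h3 := Psum_strictMono hNpos (Nat.lt_succ_self (blk N k + 1))
        simp only [Nat.succ_eq_add_one] at h3
        omega
      rw [hn'val (k + 1), hb]
      have h1 := hblock1 (blk N k)
      have h2 : (Ssum n N (blk N k + 1) : ℝ) ≤ (M k : ℝ) := by
        have : Ssum n N (blk N k + 1) ≤ M k := by omega
        exact_mod_cast this
      calc (n (blk N k + 1) : ℝ)
          ≤ τ (blk N k) * ∑ j ∈ Finset.range (blk N k + 1), (n j : ℝ) * (N j : ℝ) := h1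
        _ = τ (blk N k) * (Ssum n N (blk N k + 1) : ℝ) := by rw [hScast]
        _ ≤ τ (blk N k) * (M k : ℝ) := mul_le_mul_of_nonneg_left h2 (hτ0 _)
        _ ≤ max (τ (blk N k - 1)) (τ (blk N k)) * (M k : ℝ) :=
            mul_le_mul_of_nonneg_right (le_max_right _ _) (Nat.cast_nonneg _)
  -- integral bounds
  have hIccE : ∀ {nn : ℕ}, 1 ≤ nn → ∀ k,
      (∫ x, g k x ∂(empiricalMeasure f y nn)) ∈ Set.Icc (0 : ℝ) 1 :=
    fun {nn} h k => integral_empirical_mem_Icc (g k) (hg01 k) f y h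
  have hIccα : ∀ c k, (∫ x, g k x ∂(α c)) ∈ Set.Icc (0 : ℝ) 1 := by
    intro c k
    have := hαprob c
    exact integral_prob_mem_Icc (g k) (hg01 k) (α c)
  have habs2 : ∀ {s t : ℝ}, s ∈ Set.Icc (0 : ℝ) 1 → t ∈ Set.Icc (0 : ℝ) 1 → |s - t| ≤ 2 := by
    intro s t hs ht
    rw [abs_le]
    constructor <;> [linarith [hs.1, ht.2]; linarith [hs.2, ht.1]]
  -- the core claim
  have core : Tendsto (fun nn => PSdist g (empiricalMeasure f y nn) (α (blk N (K nn))))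
      atTop (nhds 0) := by
    refine squeeze_zero' (.of_forall fun nn => PSdist_nonneg g _ _)
      (?_ : ∀ᶠ nn in atTop, PSdist g (empiricalMeasure f y nn) (α (blk N (K nn)))
        ≤ 2 * max (τ (blk N (K nn) - 1)) (τ (blk N (K nn)))
          + PSdist g (empiricalMeasure f y (M (K nn))) (α' (M (K nn)))) ?_
    · filter_upwards [eventually_ge_atTop (M 0),
        ((blk_tendsto hNpos).comp hKtendsto).eventually_ge_atTop 1] with nn h1 h2
      have haK : M (K nn) ≤ nn := hKle nn h1
      have ha1 : 1 ≤ M (K nn) := hM1 _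
      have hnn1 : 1 ≤ nn := le_trans ha1 haK
      have htri : PSdist g (empiricalMeasure f y nn) (α (blk N (K nn)))
          ≤ PSdist g (empiricalMeasure f y nn) (empiricalMeasure f y (M (K nn)))
            + PSdist g (empiricalMeasure f y (M (K nn))) (α (blk N (K nn))) :=
        PSdist_triangle g (fun k => habs2 (hIccE hnn1 k) (hIccE ha1 k))
          (fun k => habs2 (hIccE ha1 k) (hIccα _ k))
      have hb1 : PSdist g (empiricalMeasure f y nn) (empiricalMeasure f y (M (K nn)))
          ≤ 2 * ((nn : ℝ) - M (K nn)) / (M (K nn)) :=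
        psdist_empirical_le g hg01 f y ha1 haK
      have hb2 : 2 * ((nn : ℝ) - M (K nn)) / (M (K nn))
          ≤ 2 * max (τ (blk N (K nn) - 1)) (τ (blk N (K nn))) := by
        have hg' := hgap (K nn) h2
        have hlt : nn + 1 ≤ M (K nn) + n' (K nn + 1) := by
          have h := hKlt nn
          rw [hMsucc (K nn)] at h
          omega
        have hltR : (nn : ℝ) + 1 ≤ (M (K nn) : ℝ) + (n' (K nn + 1) : ℝ) := by
          exact_mod_cast hlt
        have hMpos : (0 : ℝ) < (M (K nn) : ℝ) := by
          exact_mod_cast Nat.lt_of_lt_of_le Nat.zero_lt_one ha1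
        rw [div_le_iff₀ hMpos]
        nlinarith [hg', hltR]
      have heq : α (blk N (K nn)) = α' (M (K nn)) := (hα'M (K nn)).symm
      calc PSdist g (empiricalMeasure f y nn) (α (blk N (K nn)))
          ≤ PSdist g (empiricalMeasure f y nn) (empiricalMeasure f y (M (K nn)))
            + PSdist g (empiricalMeasure f y (M (K nn))) (α (blk N (K nn))) := htri
        _ ≤ 2 * max (τ (blk N (K nn) - 1)) (τ (blk N (K nn)))
            + PSdist g (empiricalMeasure f y (M (K nn))) (α (blk N (K nn))) := by linarith
        _ = 2 * max (τ (blk N (K nn) - 1)) (τ (blk N (K nn)))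
            + PSdist g (empiricalMeasure f y (M (K nn))) (α' (M (K nn))) := by rw [heq]
    · have hsub : Tendsto (fun c : ℕ => c - 1) atTop atTop :=
        tendsto_atTop_atTop.2 fun b => ⟨b + 1, fun c hc => by omega⟩
      have hmax : Tendsto (fun c : ℕ => max (τ (c - 1)) (τ c)) atTop (nhds 0) := by
        have := (hτ.comp hsub).max hτ
        simpa using this
      have t1 := (hmax.comp ((blk_tendsto hNpos).comp hKtendsto)).const_mul (2 : ℝ)
      have t2 := hconv.comp hKtendsto
      simpa using t1.add t2
  -- set equality
  ext μ
  simp only [limitPointSet, Set.mem_setOf_eq]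
  constructor
  · rintro ⟨hprob, φ, hφ, hlim⟩
    refine ⟨hprob, ?_⟩
    have hIccμ : ∀ k, (∫ x, g k x ∂μ) ∈ Set.Icc (0 : ℝ) 1 := by
      intro k
      have := hprob
      exact integral_prob_mem_Icc (g k) (hg01 k) μ
    have hφat : Tendsto φ atTop atTop := hφ.tendsto_atTop
    have hctend : Tendsto (fun j => blk N (K (φ j))) atTop atTop :=
      ((blk_tendsto hNpos).comp hKtendsto).comp hφat
    have hdist : Tendsto (fun j => PSdist g (α (blk N (K (φ j)))) μ) atTop (nhds 0) := by
      refine squeeze_zero' (.of_forall fun j => PSdist_nonneg g _ _)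
        (?_ : ∀ᶠ j in atTop, PSdist g (α (blk N (K (φ j)))) μ
          ≤ PSdist g (empiricalMeasure f y (φ j)) (α (blk N (K (φ j))))
            + PSdist g (empiricalMeasure f y (φ j)) μ) ?_
      · filter_upwards [hφat.eventually_ge_atTop 1] with j hj
        have htri : PSdist g (α (blk N (K (φ j)))) μ
            ≤ PSdist g (α (blk N (K (φ j)))) (empiricalMeasure f y (φ j))
              + PSdist g (empiricalMeasure f y (φ j)) μ :=
          PSdist_triangle g (fun k => habs2 (hIccα _ k) (hIccE hj k))
            (fun k => habs2 (hIccE hj k) (hIccμ k))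
        rwa [PSdist_comm g (α _) (empiricalMeasure f y (φ j))] at htri
      · have := (core.comp hφat).add hlim
        simpa using this
    obtain ⟨ψ, hψ, hcψ⟩ := exists_strictMono_subseq hctend
    exact ⟨(fun j => blk N (K (φ j))) ∘ ψ, hcψ, hdist.comp hψ.tendsto_atTop⟩
  · rintro ⟨hprob, φ, hφ, hlim⟩
    refine ⟨hprob, ?_⟩
    have hIccμ : ∀ k, (∫ x, g k x ∂μ) ∈ Set.Icc (0 : ℝ) 1 := by
      intro k
      have := hprob
      exact integral_prob_mem_Icc (g k) (hg01 k) μ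
    set κ : ℕ → ℕ := fun j => Psum N (φ j + 1) - 1 with hκdef
    have hκmono : StrictMono κ := by
      intro j j' hjj
      have h1 : Psum N (φ j + 1) < Psum N (φ j' + 1) :=
        Psum_strictMono hNpos (Nat.succ_lt_succ (hφ hjj))
      have h2 := Psum_le_self hNpos (φ j + 1)
      simp only [hκdef]
      omega
    have hblkκ : ∀ j, blk N (κ j) = φ j := fun j => hendpoint (φ j)
    have hα'κ : ∀ j, α' (M (κ j)) = α (φ j) := fun j => by rw [hα'M, hblkκ]
    refine ⟨fun j => M (κ j), hMmono.comp hκmono, ?_⟩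
    refine squeeze_zero' (.of_forall fun j => PSdist_nonneg g _ _)
      (.of_forall (fun j => ?_) :
        ∀ᶠ j in atTop, PSdist g (empiricalMeasure f y (M (κ j))) μ
          ≤ PSdist g (empiricalMeasure f y (M (κ j))) (α (φ j))
            + PSdist g (α (φ j)) μ) ?_
    · have h := PSdist_triangle g (μ := empiricalMeasure f y (M (κ j)))
        (ν := α' (M (κ j))) (ρ := μ)
        (fun k => by rw [hα'κ j]; exact habs2 (hIccE (hM1 _) k) (hIccα _ k))
        (fun k => by rw [hα'κ j]; exact habs2 (hIccα _ k) (hIccμ k))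
      rwa [hα'κ j] at h
    · have t1 : Tendsto (fun j => PSdist g (empiricalMeasure f y (M (κ j))) (α (φ j)))
          atTop (nhds 0) :=
        (hconv.comp hκmono.tendsto_atTop).congr
          (fun j => congrArg (PSdist g (empiricalMeasure f y (M (κ j)))) (hα'κ j))
      simpa using t1.add hlim
end

section
/- Let x,y belong to a compact metric dynamical system (X,f), and suppose there are integer sequences m, (n_j), (N_j), block index times I_k = [Σ_{j≤i_k} n_j N_j + 1, Σ_{j≤i_k+1} n_j N_j] such that for every t > 0 there is k_0 with d(f^{m+s−1}(x), f^{m+s−1}(y)) < t for all k ≥ k_0 and s ∈ I_k, and such that n_{i_k+1} N_{i_k+1}/(m + Σ_{j≤i_k+1} n_j N_j) → 1. Then limsup_{n→∞} (1/n)|{j ∈ [0,n−1] : d(f^j(x), f^j(y)) < t}| = 1 for every t > 0. -/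
open Filter

theorem stmt15 {X : Type*} [MetricSpace X] [CompactSpace X] (f : X → X) (hf : Continuous f)
    (x y : X) (m : ℕ) (n N : ℕ → ℕ) (hn : ∀ j, 0 < n j) (hN : ∀ j, 0 < N j)
    (i : ℕ → ℕ) (hi : StrictMono i)
    -- with P k = ∑_{j<k} n_j N_j, the block I_k = (P (i k + 1), P (i k + 2)] of times
    -- on which the orbits of x and y are eventually t-close, for every t > 0:
    (hclose : ∀ t : ℝ, 0 < t → ∃ k₀ : ℕ, ∀ k ≥ k₀, ∀ s : ℕ,
      (∑ j ∈ Finset.range (i k + 1), n j * N j) < s →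
      s ≤ (∑ j ∈ Finset.range (i k + 2), n j * N j) →
      dist (f^[m + s - 1] x) (f^[m + s - 1] y) < t)
    -- the blocks asymptotically dominate all preceding times:
    (hdom : Tendsto
      (fun k => ((n (i k + 1) * N (i k + 1) : ℕ) : ℝ) /
        ((m : ℝ) + (∑ j ∈ Finset.range (i k + 2), n j * N j : ℕ)))
      atTop (nhds 1)) :
    ∀ t : ℝ, 0 < t →
      limsup (fun nn : ℕ =>
        (Nat.card (↥{j : ℕ | j < nn ∧ dist (f^[j] x) (f^[j] y) < t}) : ℝ) / nn) atTop = 1 := by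
  intro t ht
  set P : ℕ → ℕ := fun q => ∑ j ∈ Finset.range q, n j * N j with hP
  set u : ℕ → ℝ := fun nn : ℕ =>
    (Nat.card (↥{j : ℕ | j < nn ∧ dist (f^[j] x) (f^[j] y) < t}) : ℝ) / nn with hu
  -- basic facts about S
  have hSfin : ∀ nn : ℕ, ({j : ℕ | j < nn ∧ dist (f^[j] x) (f^[j] y) < t}).Finite := by
    intro nn
    exact (Set.finite_Iio nn).subset (fun j hj => hj.1)
  have hcard : ∀ nn : ℕ,
      (Nat.card (↥{j : ℕ | j < nn ∧ dist (f^[j] x) (f^[j] y) < t}) : ℕ)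
        = ({j : ℕ | j < nn ∧ dist (f^[j] x) (f^[j] y) < t}).ncard := by
    intro nn; exact Nat.card_coe_set_eq _
  have hPmono : ∀ q, q ≤ P q := by
    intro q
    calc q = ∑ j ∈ Finset.range q, 1 := by simp
    _ ≤ P q := Finset.sum_le_sum (fun j _ => Nat.one_le_iff_ne_zero.mpr
        (Nat.mul_ne_zero (hn j).ne' (hN j).ne'))
  -- term-wise bounds
  have hle1 : ∀ nn : ℕ, u nn ≤ 1 := by
    intro nn
    rcases Nat.eq_zero_or_pos nn with h0 | hpos
    · simp [hu, h0]
    · rw [hu]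
      simp only
      rw [div_le_one (by exact_mod_cast hpos)]
      have : ({j : ℕ | j < nn ∧ dist (f^[j] x) (f^[j] y) < t}).ncard ≤ nn := by
        calc ({j : ℕ | j < nn ∧ dist (f^[j] x) (f^[j] y) < t}).ncard
            ≤ (↑(Finset.range nn) : Set ℕ).ncard := by
              apply Set.ncard_le_ncard _ (Finset.range nn).finite_toSet
              intro j hj; simpa using hj.1
        _ = nn := by rw [Set.ncard_coe_finset, Finset.card_range]
      rw [hcard]; exact_mod_cast this
  have hge0 : ∀ nn : ℕ, 0 ≤ u nn := by
    intro nn; exact div_nonneg (by positivity) (by positivity)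
  -- subsequence
  set g : ℕ → ℕ := fun k => m + P (i k + 2) with hg
  have hgtop : Tendsto g atTop atTop := by
    apply tendsto_atTop_mono (fun k => ?_) tendsto_id
    calc (k : ℕ) ≤ i k := hi.le_apply
    _ ≤ P (i k + 2) := le_trans (by omega) (hPmono _)
    _ ≤ g k := Nat.le_add_left _ _
  obtain ⟨k₀, hk₀⟩ := hclose t ht
  -- lower bound along subsequence
  have hlow : ∀ k ≥ k₀, ((n (i k + 1) * N (i k + 1) : ℕ) : ℝ) / (g k : ℝ) ≤ u (g k) := by
    intro k hk
    set A := i k + 1 with hA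
    have hP2 : P (A + 1) = P A + n A * N A := Finset.sum_range_succ _ _
    have hsub : (↑(Finset.Ico (m + P A) (m + P (A + 1))) : Set ℕ) ⊆
        {j : ℕ | j < g k ∧ dist (f^[j] x) (f^[j] y) < t} := by
      intro j hj
      simp only [Finset.coe_Ico, Set.mem_Ico] at hj
      constructor
      · exact hj.2
      · have h1 : P A < j - m + 1 := by omega
        have h2 : j - m + 1 ≤ P (A + 1) := by omega
        have hd := hk₀ k hk (j - m + 1) h1 h2
        have hj' : m + (j - m + 1) - 1 = j := by omega
        rwa [hj'] at hd
    have hncard : (n A * N A : ℕ) ≤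
        ({j : ℕ | j < g k ∧ dist (f^[j] x) (f^[j] y) < t}).ncard := by
      calc (n A * N A : ℕ) = (Finset.Ico (m + P A) (m + P (A + 1))).card := by
            rw [Nat.card_Ico]; omega
      _ = (↑(Finset.Ico (m + P A) (m + P (A + 1))) : Set ℕ).ncard := by
            rw [Set.ncard_coe_finset]
      _ ≤ _ := Set.ncard_le_ncard hsub (hSfin _)
    rw [hu]
    simp only
    rw [hcard]
    gcongr
  -- tendsto along subsequence
  have hdom' : Tendsto (fun k => ((n (i k + 1) * N (i k + 1) : ℕ) : ℝ) / (g k : ℝ))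
      atTop (nhds 1) := by
    refine hdom.congr fun k => ?_
    have hgk : ((g k : ℕ) : ℝ) = (m : ℝ) + ((∑ j ∈ Finset.range (i k + 2), n j * N j : ℕ) : ℝ) := by
      rw [hg]; simp only [hP]; push_cast; ring
    rw [hgk]
  have htend : Tendsto (fun k => u (g k)) atTop (nhds 1) := by
    apply tendsto_of_tendsto_of_tendsto_of_le_of_le' hdom' tendsto_const_nhds
    · filter_upwards [eventually_ge_atTop k₀] with k hk using hlow k hk
    · filter_upwards with k using hle1 (g k)
  -- combine
  have hbdd : IsBoundedUnder (· ≤ ·) atTop u :=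
    ⟨1, eventually_map.mpr (Eventually.of_forall hle1)⟩
  have hcobdd : IsCoboundedUnder (· ≤ ·) atTop u :=
    IsBoundedUnder.isCoboundedUnder_le ⟨0, eventually_map.mpr (Eventually.of_forall hge0)⟩
  have hles : limsup u atTop ≤ 1 :=
    limsup_le_of_le hcobdd (by filter_upwards with nn using hle1 nn)
  have hmaple : map g atTop ≤ atTop := hgtop
  have hges : (1 : ℝ) ≤ limsup u atTop := by
    have h1 : limsup u (map g atTop) = 1 := by
      exact htend.limsup_eq
    have hcob2 : IsCoboundedUnder (· ≤ ·) (map g atTop) u := by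
      have h2 : IsCoboundedUnder (· ≤ ·) atTop (fun k => u (g k)) :=
        (htend.isBoundedUnder_ge).isCoboundedUnder_le
      simpa [IsCoboundedUnder, Filter.map_map, Function.comp_def] using h2
    calc (1 : ℝ) = limsup u (map g atTop) := h1.symm
    _ ≤ limsup u atTop := limsup_le_limsup_of_le hmaple hcob2 hbdd
  exact le_antisymm hles hges
end
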